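/- arXiv:1803.02535 — 2 statements merged into one kernel-verified Lean document; each statement's English description precedes it below -/
import Mathlib

section
/- (Theorem 2.1) With notation as in the setup, let S ⊆ {1,…,n} have cardinality ε. Then in ℂ[Γ]: A^0_{Φ_S} = (1/2)·T − (ε/n)·(1 − ρ)·T + (ε/(h n²))·(1 − ρ)·Σ_{g∈G} Σ_{x∈H} g x g⁻¹ + (1/(h n²))·(1 − ρ)·Σ_{g∈G} Σ_{i,j∈S, i≠j} Σ_{x∈H} g σ_i x σ_j⁻¹ g⁻¹. -/
open MonoidAlgebra Finset

noncomputable section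

/-- `Γ = G × ℤ/2ℤ` (written multiplicatively). -/
abbrev Gam (G : Type*) := G × Multiplicative (ZMod 2)

/-- The element `ρ = (1,1) ∈ Γ` ("complex conjugation"). -/
def rhoEl (G : Type*) [Group G] : Gam G := (1, Multiplicative.ofAdd (1 : ZMod 2))

/-- Embedding of `g ∈ G` into `ℂ[Γ]` via `g ↦ (g,0)`. -/
def emb {G : Type*} [Group G] (g : G) : MonoidAlgebra ℂ (Gam G) :=
  MonoidAlgebra.of ℂ (Gam G) (g, 1)

/-- `ρ` as an element of `ℂ[Γ]`. -/
def rho (G : Type*) [Group G] : MonoidAlgebra ℂ (Gam G) :=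
  MonoidAlgebra.of ℂ (Gam G) (rhoEl G)

/-- `T = Σ_{g ∈ G} g ∈ ℂ[Γ]`. -/
def Tsum (G : Type*) [Group G] [Fintype G] : MonoidAlgebra ℂ (Gam G) :=
  ∑ g : G, emb g

/-- `Σ_{x ∈ H} a·x·b ∈ ℂ[Γ]`. -/
def cosetSum {G : Type*} [Group G] [Fintype G] (H : Subgroup G) [DecidablePred (· ∈ H)]
    (a b : G) : MonoidAlgebra ℂ (Gam G) :=
  ∑ x : H, emb (a * (x : G) * b)

/-- `Φ_S = T + (ρ-1)·Σ_{i∈S} Σ_{x∈H} σ_i x ∈ ℂ[Γ]`, the CM type attached to `S`. -/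
def Phi {G : Type*} [Group G] [Fintype G] (H : Subgroup G) [DecidablePred (· ∈ H)] {n : ℕ}
    (σ : Fin n → G) (S : Finset (Fin n)) : MonoidAlgebra ℂ (Gam G) :=
  Tsum G + (rho G - 1) * ∑ i ∈ S, cosetSum H (σ i) 1

/-- The ℂ-linear map `ι : ℂ[Γ] → ℂ[Γ]` sending each `γ ∈ Γ` to `γ⁻¹`. -/
def iota (Γ : Type*) [Group Γ] : MonoidAlgebra ℂ Γ →ₗ[ℂ] MonoidAlgebra ℂ Γ :=
  MonoidAlgebra.mapDomainLinearMap ℂ ℂ fun γ : Γ => γ⁻¹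

/-- `A_{Φ_S} = (1/(2hn))·Φ_S·ι(Φ_S)`. -/
def Afun {G : Type*} [Group G] [Fintype G] (H : Subgroup G) [DecidablePred (· ∈ H)] {n : ℕ}
    (σ : Fin n → G) (S : Finset (Fin n)) : MonoidAlgebra ℂ (Gam G) :=
  ((2 * (Nat.card H) * n : ℂ))⁻¹ • (Phi H σ S * iota (Gam G) (Phi H σ S))

/-- `A⁰_{Φ_S} = (1/|Γ|)·Σ_{γ∈Γ} γ·A_{Φ_S}·γ⁻¹`. -/
def A0 {G : Type*} [Group G] [Fintype G] (H : Subgroup G) [DecidablePred (· ∈ H)] {n : ℕ}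
    (σ : Fin n → G) (S : Finset (Fin n)) : MonoidAlgebra ℂ (Gam G) :=
  ((Fintype.card (Gam G) : ℂ))⁻¹ •
    ∑ γ : Gam G, MonoidAlgebra.of ℂ (Gam G) γ * Afun H σ S * MonoidAlgebra.of ℂ (Gam G) γ⁻¹

/-! ρ is central of order two, so conjugation by `(g, t) ∈ Γ` is conjugation by `g`, and
`(1 - ρ)² = 2 (1 - ρ)`. Write `Φ_S = T - (1 - ρ) B` with `B = Σ_{i ∈ S} σ_i H`. As `ι` is an
anti-automorphism fixing `T` and `ρ`, and `T` absorbs group elements while `H · H = h H`,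
`Φ_S ι(Φ_S) = |G| T - 2εh (1 - ρ) T + 2h (1 - ρ) Σ_{i,j ∈ S} σ_i H σ_j⁻¹`.
Conjugation fixes `T`, and after averaging each diagonal term `i = j` becomes `Σ_g g H g⁻¹`;
`|G| = hn` then gives the formula. -/

section Basics

variable {G : Type*} [Group G]

lemma emb_mul (a b : G) : (emb (a * b) : MonoidAlgebra ℂ (Gam G)) = emb a * emb b := by
  rw [emb, emb, emb, ← map_mul, Prod.mk_mul_mk, one_mul]

lemma commute_of_mk_one (t : Multiplicative (ZMod 2)) (x : MonoidAlgebra ℂ (Gam G)) :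
    Commute (of ℂ (Gam G) (1, t)) x :=
  single_commute (fun _ => Prod.ext ((one_mul _).trans (mul_one _).symm) (mul_comm _ _))
    (mul_comm 1) x

lemma commute_rho (x : MonoidAlgebra ℂ (Gam G)) : Commute (rho G) x :=
  commute_of_mk_one _ x

lemma commute_one_sub_rho (x : MonoidAlgebra ℂ (Gam G)) : Commute (1 - rho G) x :=
  (Commute.one_left x).sub_left (commute_rho x)

lemma rhoEl_mul_self : rhoEl G * rhoEl G = 1 :=
  Prod.ext (one_mul 1)
    (by decide : Multiplicative.ofAdd (1 : ZMod 2) * Multiplicative.ofAdd 1 = 1)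

lemma rhoEl_inv : (rhoEl G)⁻¹ = rhoEl G :=
  inv_eq_of_mul_eq_one_right rhoEl_mul_self

lemma rho_mul_rho : rho G * rho G = 1 := by
  rw [rho, ← map_mul, rhoEl_mul_self, map_one]

lemma one_sub_rho_mul_self : (1 - rho G) * (1 - rho G) = (2 : ℂ) • (1 - rho G) := by
  rw [two_smul, sub_mul, mul_sub, mul_sub, rho_mul_rho, mul_one, one_mul, mul_one]
  abel

lemma of_mul_mul_of_inv (g : G) (t : Multiplicative (ZMod 2)) (x : MonoidAlgebra ℂ (Gam G)) :
    of ℂ (Gam G) (g, t) * x * of ℂ (Gam G) (g, t)⁻¹ = emb g * x * emb g⁻¹ := by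
  have hsplit : ((g, t) : Gam G) = (g, 1) * (1, t) := by simp
  have hcancel : of ℂ (Gam G) (1, t) * of ℂ (Gam G) (1, t)⁻¹ = 1 := by
    rw [← map_mul, mul_inv_cancel, map_one]
  have hinv : of ℂ (Gam G) (g, 1)⁻¹ = emb g⁻¹ := by rw [Prod.inv_mk, inv_one]; rfl
  rw [hsplit, mul_inv_rev, map_mul, map_mul, hinv, ← emb, mul_assoc (emb g),
    (commute_of_mk_one t x).eq]
  simp only [mul_assoc]
  rw [← mul_assoc (of ℂ (Gam G) (1, t)), hcancel, one_mul]

end Basics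

section Iota

lemma iota_single {Γ : Type*} [Group Γ] (γ : Γ) (r : ℂ) :
    iota Γ (single γ r) = single γ⁻¹ r :=
  mapDomainLinearMap_single _ _ _

lemma iota_mul {Γ : Type*} [Group Γ] (x y : MonoidAlgebra ℂ Γ) :
    iota Γ (x * y) = iota Γ y * iota Γ x := by
  induction x using MonoidAlgebra.induction_linear with
  | zero => simp
  | add x₁ x₂ h₁ h₂ => rw [add_mul, map_add, map_add, h₁, h₂, mul_add]
  | single a r =>
    induction y using MonoidAlgebra.induction_linear with
    | zero => simp
    | add y₁ y₂ h₁ h₂ => rw [mul_add, map_add, map_add, h₁, h₂, add_mul]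
    | single b s => simp only [single_mul_single, iota_single, mul_inv_rev, mul_comm r]

lemma iota_one {Γ : Type*} [Group Γ] : iota Γ 1 = 1 := by
  rw [one_def, iota_single, inv_one]

variable {G : Type*} [Group G]

lemma iota_emb (g : G) : iota (Gam G) (emb g) = emb g⁻¹ := by
  rw [emb, of_apply, iota_single, Prod.inv_mk, inv_one]
  rfl

lemma iota_rho : iota (Gam G) (rho G) = rho G := by
  rw [rho, of_apply, iota_single, rhoEl_inv]

end Iota

section Sums

variable {G : Type*} [Group G] [Fintype G]

lemma Tsum_mul_emb (g : G) : Tsum G * emb g = Tsum G := by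
  rw [Tsum, Finset.sum_mul]
  simp_rw [← emb_mul]
  exact Fintype.sum_equiv (Equiv.mulRight g) _ _ fun _ => rfl

lemma emb_mul_Tsum (g : G) : emb g * Tsum G = Tsum G := by
  rw [Tsum, Finset.mul_sum]
  simp_rw [← emb_mul]
  exact Fintype.sum_equiv (Equiv.mulLeft g) _ _ fun _ => rfl

lemma Tsum_mul_sum_emb {ι : Type*} (s : Finset ι) (f : ι → G) :
    Tsum G * ∑ i ∈ s, emb (f i) = (s.card : ℂ) • Tsum G := by
  simp_rw [Finset.mul_sum, Tsum_mul_emb, Finset.sum_const, Nat.cast_smul_eq_nsmul]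

lemma sum_emb_mul_Tsum {ι : Type*} (s : Finset ι) (f : ι → G) :
    (∑ i ∈ s, emb (f i)) * Tsum G = (s.card : ℂ) • Tsum G := by
  simp_rw [Finset.sum_mul, emb_mul_Tsum, Finset.sum_const, Nat.cast_smul_eq_nsmul]

lemma Tsum_mul_Tsum : Tsum G * Tsum G = (Fintype.card G : ℂ) • Tsum G :=
  Tsum_mul_sum_emb _ _

lemma iota_Tsum : iota (Gam G) (Tsum G) = Tsum G := by
  simp_rw [Tsum, map_sum, iota_emb]
  exact Fintype.sum_equiv (Equiv.inv G) _ _ fun _ => rfl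

variable (H : Subgroup G) [DecidablePred (· ∈ H)]

lemma Tsum_mul_cosetSum (a b : G) : Tsum G * cosetSum H a b = (Nat.card H : ℂ) • Tsum G := by
  rw [cosetSum, Tsum_mul_sum_emb, Finset.card_univ, Nat.card_eq_fintype_card]

lemma cosetSum_mul_Tsum (a b : G) : cosetSum H a b * Tsum G = (Nat.card H : ℂ) • Tsum G := by
  rw [cosetSum, sum_emb_mul_Tsum, Finset.card_univ, Nat.card_eq_fintype_card]

lemma cosetSum_mul_cosetSum (a b : G) :
    cosetSum H a 1 * cosetSum H 1 b = (Nat.card H : ℂ) • cosetSum H a b := by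
  have hrow (x : H) :
      ∑ y : H, emb (a * (x : G) * 1) * emb (1 * (y : G) * b) = cosetSum H a b := by
    simp_rw [← emb_mul]
    refine Fintype.sum_equiv (Equiv.mulLeft x) _ _ fun y => ?_
    simp [mul_assoc]
  rw [cosetSum, cosetSum, Finset.sum_mul_sum, Fintype.sum_congr _ _ hrow, Finset.sum_const,
    Finset.card_univ, Nat.card_eq_fintype_card, Nat.cast_smul_eq_nsmul]

lemma emb_mul_cosetSum_mul_emb_inv (g a b : G) :
    emb g * cosetSum H a b * emb g⁻¹ = cosetSum H (g * a) (b * g⁻¹) := by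
  simp_rw [cosetSum, Finset.mul_sum, Finset.sum_mul, ← emb_mul, mul_assoc]

lemma iota_cosetSum (a b : G) : iota (Gam G) (cosetSum H a b) = cosetSum H b⁻¹ a⁻¹ := by
  simp_rw [cosetSum, map_sum, iota_emb]
  refine Fintype.sum_equiv (Equiv.inv H) _ _ fun x => ?_
  simp [mul_assoc]

end Sums

section Averaging

variable (G : Type*) [Group G] [Fintype G]

def conjSum : MonoidAlgebra ℂ (Gam G) →ₗ[ℂ] MonoidAlgebra ℂ (Gam G) where
  toFun x := ∑ g : G, emb g * x * emb g⁻¹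
  map_add' x y := by simp only [mul_add, add_mul, Finset.sum_add_distrib]
  map_smul' c x := by simp only [mul_smul_comm, smul_mul_assoc, Finset.smul_sum, RingHom.id_apply]

variable {G}

lemma conjSum_apply (x : MonoidAlgebra ℂ (Gam G)) :
    conjSum G x = ∑ g : G, emb g * x * emb g⁻¹ :=
  rfl

lemma sum_of_mul_mul_of_inv (x : MonoidAlgebra ℂ (Gam G)) :
    ∑ γ : Gam G, of ℂ (Gam G) γ * x * of ℂ (Gam G) γ⁻¹ = (2 : ℂ) • conjSum G x := by
  simp_rw [Fintype.sum_prod_type, of_mul_mul_of_inv, Finset.sum_const, Finset.card_univ,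
    ← Nat.cast_smul_eq_nsmul ℂ, ← Finset.smul_sum, conjSum_apply]
  norm_num

lemma conjSum_Tsum : conjSum G (Tsum G) = (Fintype.card G : ℂ) • Tsum G := by
  simp_rw [conjSum_apply, emb_mul_Tsum, Tsum_mul_emb, Finset.sum_const, Finset.card_univ,
    Nat.cast_smul_eq_nsmul]

lemma conjSum_one_sub_rho_mul (x : MonoidAlgebra ℂ (Gam G)) :
    conjSum G ((1 - rho G) * x) = (1 - rho G) * conjSum G x := by
  rw [conjSum_apply, conjSum_apply, Finset.mul_sum]
  refine Finset.sum_congr rfl fun g _ => ?_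
  rw [← mul_assoc (emb g), ← (commute_one_sub_rho (emb g)).eq]
  simp only [mul_assoc]

variable (H : Subgroup G) [DecidablePred (· ∈ H)]

lemma conjSum_sum_sum_cosetSum {ι : Type*} [DecidableEq ι] (σ : ι → G) (S : Finset ι) :
    conjSum G (∑ i ∈ S, ∑ j ∈ S, cosetSum H (σ i) (σ j)⁻¹)
      = (S.card : ℂ) • ∑ g : G, cosetSum H g g⁻¹
        + ∑ g : G, ∑ i ∈ S, ∑ j ∈ S.erase i, cosetSum H (g * σ i) ((σ j)⁻¹ * g⁻¹) := by
  have hdiag (i : ι) :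
      ∑ g : G, cosetSum H (g * σ i) ((σ i)⁻¹ * g⁻¹) = ∑ g : G, cosetSum H g g⁻¹ :=
    Fintype.sum_equiv (Equiv.mulRight (σ i)) _ _ fun g => by rw [Equiv.coe_mulRight, mul_inv_rev]
  have hsplit (g : G) : ∑ i ∈ S, ∑ j ∈ S, cosetSum H (g * σ i) ((σ j)⁻¹ * g⁻¹)
      = ∑ i ∈ S, cosetSum H (g * σ i) ((σ i)⁻¹ * g⁻¹)
        + ∑ i ∈ S, ∑ j ∈ S.erase i, cosetSum H (g * σ i) ((σ j)⁻¹ * g⁻¹) := by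
    rw [← Finset.sum_add_distrib]
    exact Finset.sum_congr rfl fun i hi => (Finset.add_sum_erase S _ hi).symm
  simp_rw [conjSum_apply, Finset.mul_sum, Finset.sum_mul, emb_mul_cosetSum_mul_emb_inv, hsplit,
    Finset.sum_add_distrib]
  rw [Finset.sum_comm, Finset.sum_congr rfl fun i _ => hdiag i, Finset.sum_const,
    Nat.cast_smul_eq_nsmul]

end Averaging

section CMType

variable {G : Type*} [Group G] [Fintype G] (H : Subgroup G) [DecidablePred (· ∈ H)]
  {n : ℕ} (σ : Fin n → G) (S : Finset (Fin n))

lemma Phi_eq : Phi H σ S = Tsum G - (1 - rho G) * ∑ i ∈ S, cosetSum H (σ i) 1 := by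
  rw [Phi, ← neg_sub 1 (rho G), neg_mul, ← sub_eq_add_neg]

lemma iota_Phi :
    iota (Gam G) (Phi H σ S) = Tsum G - (1 - rho G) * ∑ i ∈ S, cosetSum H 1 (σ i)⁻¹ := by
  rw [Phi_eq, map_sub, iota_mul, iota_Tsum, map_sub, iota_one, iota_rho, map_sum,
    (commute_one_sub_rho _).eq]
  simp_rw [iota_cosetSum, inv_one]

lemma Phi_mul_iota_Phi :
    Phi H σ S * iota (Gam G) (Phi H σ S)
      = (Fintype.card G : ℂ) • Tsum G
        - (2 * S.card * Nat.card H : ℂ) • ((1 - rho G) * Tsum G)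
        + (2 * Nat.card H : ℂ) • ((1 - rho G) * ∑ i ∈ S, ∑ j ∈ S, cosetSum H (σ i) (σ j)⁻¹) := by
  set B := ∑ i ∈ S, cosetSum H (σ i) 1
  set B' := ∑ i ∈ S, cosetSum H 1 (σ i)⁻¹
  have hTB' : Tsum G * B' = (S.card * Nat.card H : ℂ) • Tsum G := by
    simp_rw [B', Finset.mul_sum, Tsum_mul_cosetSum, Finset.sum_const,
      ← Nat.cast_smul_eq_nsmul ℂ, smul_smul]
  have hBT : B * Tsum G = (S.card * Nat.card H : ℂ) • Tsum G := by
    simp_rw [B, Finset.sum_mul, cosetSum_mul_Tsum, Finset.sum_const,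
      ← Nat.cast_smul_eq_nsmul ℂ, smul_smul]
  have hBB' : B * B' = (Nat.card H : ℂ) • ∑ i ∈ S, ∑ j ∈ S, cosetSum H (σ i) (σ j)⁻¹ := by
    simp_rw [B, B', Finset.sum_mul_sum, cosetSum_mul_cosetSum, Finset.smul_sum]
  have hexpand : (Tsum G - (1 - rho G) * B) * (Tsum G - (1 - rho G) * B')
      = Tsum G * Tsum G - (1 - rho G) * (Tsum G * B') - (1 - rho G) * (B * Tsum G)
        + ((1 - rho G) * (1 - rho G)) * (B * B') := by
    have hmove (x y : MonoidAlgebra ℂ (Gam G)) :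
        x * ((1 - rho G) * y) = (1 - rho G) * (x * y) := by
      rw [← mul_assoc, ← (commute_one_sub_rho x).eq, mul_assoc]
    rw [sub_mul, mul_sub, mul_sub, hmove, mul_assoc, hmove, mul_assoc, sub_add,
      mul_assoc (1 - rho G) (1 - rho G)]
  rw [iota_Phi, Phi_eq, hexpand, Tsum_mul_Tsum, hTB', hBT, hBB', one_sub_rho_mul_self]
  simp only [mul_smul_comm, smul_mul_assoc, smul_smul]
  match_scalars <;> ring

end CMType

lemma Subgroup.card_eq_card_mul_card_of_bijective_mk {G ι : Type*} [Group G] (H : Subgroup G)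
    (σ : ι → G) (hσ : Function.Bijective fun i => (σ i : G ⧸ H)) :
    Nat.card G = Nat.card H * Nat.card ι := by
  rw [H.card_eq_card_quotient_mul_card_subgroup, ← Nat.card_eq_of_bijective _ hσ, mul_comm]

/-- Theorem 2.1: explicit formula for the class function `A⁰_{Φ_S}`. -/
theorem A0_eq {G : Type*} [Group G] [Fintype G] (H : Subgroup G) [DecidablePred (· ∈ H)]
    {n : ℕ} (σ : Fin n → G)
    (hσ : Function.Bijective fun i : Fin n => (QuotientGroup.mk (σ i) : G ⧸ H))
    (S : Finset (Fin n)) :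
    A0 H σ S
      = (2 : ℂ)⁻¹ • Tsum G
        - ((S.card : ℂ) / (n : ℂ)) • ((1 - rho G) * Tsum G)
        + ((S.card : ℂ) / ((Nat.card H : ℂ) * (n : ℂ) ^ 2)) •
            ((1 - rho G) * ∑ g : G, cosetSum H g g⁻¹)
        + (((Nat.card H : ℂ) * (n : ℂ) ^ 2))⁻¹ •
            ((1 - rho G) *
              ∑ g : G, ∑ i ∈ S, ∑ j ∈ S.erase i, cosetSum H (g * σ i) ((σ j)⁻¹ * g⁻¹)) := by
  have hcard : Fintype.card G = Nat.card H * n := by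
    rw [← Nat.card_eq_fintype_card, H.card_eq_card_mul_card_of_bijective_mk σ hσ, Nat.card_fin]
  have hpos : Nat.card H * n ≠ 0 := hcard ▸ Fintype.card_ne_zero
  have hh : (Nat.card H : ℂ) ≠ 0 := by exact_mod_cast left_ne_zero_of_mul hpos
  have hn : (n : ℂ) ≠ 0 := by exact_mod_cast right_ne_zero_of_mul hpos
  have hcardΓ : Fintype.card (Gam G) = 2 * Fintype.card G := by
    rw [Fintype.card_prod, mul_comm]
    rfl
  rw [A0, sum_of_mul_mul_of_inv, Afun, map_smul, Phi_mul_iota_Phi, map_add, map_sub, map_smul,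
    map_smul, map_smul, conjSum_Tsum, conjSum_one_sub_rho_mul, conjSum_one_sub_rho_mul,
    conjSum_Tsum, conjSum_sum_sum_cosetSum, hcardΓ, hcard]
  simp only [mul_add, mul_smul_comm, smul_smul]
  match_scalars <;> field_simp

end
end

section
/- (Linear-algebra content of Theorem 2.4 / Theorem 1.3) With notation as in the setup, let L₁, L₂ : ℂ[Γ] → ℂ be ℂ-linear maps such that L₁(A^0_{Φ_S}) = L₂(A^0_{Φ_S}) for every subset S ⊆ {1,…,n} with #S ≤ 2. Then L₁(A^0_{Φ_S}) = L₂(A^0_{Φ_S}) for every subset S ⊆ {1,…,n}. (Applied to Colmez's height ht and to Z(0,·), together with the Yang–Yin theorem for signatures (n,0) and (n−1,1), this reduces the Colmez conjecture for a unitary CM field E = kF to CM types of signature (n−2,2).) -/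
open MonoidAlgebra Finset

noncomputable section

/-!
Write `Φ_S = T + Σ_{i∈S} u_i` with `u_i = (ρ - 1)·Σ_{x∈H} σ_i x`. Then `Φ_S·ι(Φ_S)` is quadratic
in the indicator of `S`: a constant `T·ι(T)`, linear terms `T·ι(u_i) + u_i·ι(T)` and cross terms
`u_i·ι(u_j)`. As `A⁰` and `L₁ - L₂` are linear, `S ↦ (L₁ - L₂)(A⁰_{Φ_S})` is such a quadratic set
function `c + Σ_{i∈S} a_i + Σ_{i,j∈S} b_ij`, and one that vanishes on sets of size `≤ 2` vanishes
everywhere: `∅` gives `c = 0`, singletons give `a_i + b_ii = 0`, pairs give `b_ij + b_ji = 0`, and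
adding an element to `S` changes the value only by such terms.
-/

theorem Finset.quadratic_eq_zero_of_forall_card_le_two {ι M : Type*} [DecidableEq ι]
    [AddCommGroup M] (c : M) (a : ι → M) (b : ι → ι → M)
    (h : ∀ S : Finset ι, #S ≤ 2 → c + ∑ i ∈ S, a i + ∑ i ∈ S, ∑ j ∈ S, b i j = 0)
    (S : Finset ι) : c + ∑ i ∈ S, a i + ∑ i ∈ S, ∑ j ∈ S, b i j = 0 := by
  have hc : c = 0 := by simpa using h ∅ (by simp)
  have ha : ∀ i, a i + b i i = 0 := fun i => by
    simpa [hc] using h {i} (by simp)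
  have hb : ∀ i j, i ≠ j → b i j + b j i = 0 := fun i j hij => by
    have hpair := h {i, j} (card_pair hij).le
    simp only [sum_pair hij, hc, zero_add] at hpair
    calc b i j + b j i
        = a i + a j + (b i i + b i j + (b j i + b j j)) - (a i + b i i) - (a j + b j j) := by
          abel
      _ = 0 := by rw [hpair, ha, ha, sub_zero, sub_zero]
  induction S using Finset.induction_on with
  | empty => simpa using hc
  | insert k S hk ih =>
    have hpairs : ∑ j ∈ S, (b k j + b j k) = 0 :=
      sum_eq_zero fun j hj => hb k j (ne_of_mem_of_not_mem hj hk).symm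
    rw [sum_add_distrib] at hpairs
    simp only [sum_insert hk, sum_add_distrib]
    calc _ = (c + ∑ i ∈ S, a i + ∑ i ∈ S, ∑ j ∈ S, b i j) + (a k + b k k)
          + (∑ j ∈ S, b k j + ∑ j ∈ S, b j k) := by abel
      _ = 0 := by rw [ih, ha, hpairs, add_zero, add_zero]

theorem mul_map_eq_zero_of_forall_card_le_two {ι A M : Type*} [DecidableEq ι]
    [NonUnitalNonAssocRing A] [AddCommGroup M] (κ : A →+ A) (Λ : A →+ M) (t : A) (u : ι → A)
    (h : ∀ S : Finset ι, #S ≤ 2 → Λ ((t + ∑ i ∈ S, u i) * κ (t + ∑ i ∈ S, u i)) = 0)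
    (S : Finset ι) : Λ ((t + ∑ i ∈ S, u i) * κ (t + ∑ i ∈ S, u i)) = 0 := by
  have hexpand : ∀ S : Finset ι, Λ ((t + ∑ i ∈ S, u i) * κ (t + ∑ i ∈ S, u i)) =
      Λ (t * κ t) + ∑ i ∈ S, Λ (t * κ (u i) + u i * κ t)
        + ∑ i ∈ S, ∑ j ∈ S, Λ (u i * κ (u j)) := fun S => by
    rw [map_add, map_sum, add_mul, mul_add, mul_add, sum_mul_sum, mul_sum, sum_mul]
    simp only [map_add, map_sum, sum_add_distrib]
    abel
  simp only [hexpand] at h ⊢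
  exact quadratic_eq_zero_of_forall_card_le_two _ _ _ h S

def conjAverage (k Γ : Type*) [Field k] [Group Γ] [Fintype Γ] :
    MonoidAlgebra k Γ →ₗ[k] MonoidAlgebra k Γ :=
  (Fintype.card Γ : k)⁻¹ • ∑ γ : Γ,
    LinearMap.mulLeft k (MonoidAlgebra.of k Γ γ) ∘ₗ LinearMap.mulRight k (MonoidAlgebra.of k Γ γ⁻¹)

theorem A0_eq_conjAverage {G : Type*} [Group G] [Fintype G] (H : Subgroup G)
    [DecidablePred (· ∈ H)] {n : ℕ} (σ : Fin n → G) (S : Finset (Fin n)) :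
    A0 H σ S = conjAverage ℂ (Gam G) (Afun H σ S) := by
  simp [A0, conjAverage, mul_assoc]

theorem linear_functionals_agree_general {G : Type*} [Group G] [Fintype G] (H : Subgroup G)
    [DecidablePred (· ∈ H)] {n : ℕ} (σ : Fin n → G)
    (L₁ L₂ : MonoidAlgebra ℂ (Gam G) →ₗ[ℂ] ℂ)
    (hL : ∀ S : Finset (Fin n), S.card ≤ 2 → L₁ (A0 H σ S) = L₂ (A0 H σ S)) :
    ∀ S : Finset (Fin n), L₁ (A0 H σ S) = L₂ (A0 H σ S) := by
  intro S
  set Λ : MonoidAlgebra ℂ (Gam G) →+ ℂ := ((L₁ - L₂) ∘ₗ conjAverage ℂ (Gam G) ∘ₗ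
    ((2 * (Nat.card H) * n : ℂ)⁻¹ • LinearMap.id)).toAddMonoidHom
  have hΛ : ∀ S, L₁ (A0 H σ S) - L₂ (A0 H σ S) = Λ (Phi H σ S * iota (Gam G) (Phi H σ S)) :=
    fun S => by rw [A0_eq_conjAverage]; rfl
  have hPhi : ∀ S, Phi H σ S = Tsum G + ∑ i ∈ S, (rho G - 1) * cosetSum H (σ i) 1 :=
    fun S => by rw [Phi, mul_sum]
  rw [← sub_eq_zero, hΛ, hPhi]
  refine mul_map_eq_zero_of_forall_card_le_two (iota (Gam G)).toAddMonoidHom Λ _ _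
    (fun S hS => ?_) S
  rw [← hPhi]
  exact (hΛ S).symm.trans (sub_eq_zero.mpr (hL S hS))

/-- linear-algebra content of Theorem 2.4 / Theorem 1.3: if two ℂ-linear
functionals on `ℂ[Γ]` agree on `A⁰_{Φ_S}` for all `S` with `#S ≤ 2`, then they agree on
`A⁰_{Φ_S}` for every `S`. -/
theorem linear_functionals_agree {G : Type*} [Group G] [Fintype G] (H : Subgroup G)
    [DecidablePred (· ∈ H)] {n : ℕ} (σ : Fin n → G)
    (hσ : Function.Bijective fun i : Fin n => (QuotientGroup.mk (σ i) : G ⧸ H))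
    (L₁ L₂ : MonoidAlgebra ℂ (Gam G) →ₗ[ℂ] ℂ)
    (hL : ∀ S : Finset (Fin n), S.card ≤ 2 → L₁ (A0 H σ S) = L₂ (A0 H σ S)) :
    ∀ S : Finset (Fin n), L₁ (A0 H σ S) = L₂ (A0 H σ S) :=
  linear_functionals_agree_general H σ L₁ L₂ hL

end
end
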